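/- arXiv:1512.07020 — 5 statements merged into one kernel-verified Lean document; each statement's English description precedes it below -/
import Mathlib

section
/- Let Φ be a reduced root system in a finite-dimensional real inner product space with positive roots Φ⁺ and simple roots Δ = {α₁,…,α_ℓ}. Suppose 𝔤 is a complex Lie algebra with basis {e_α : α ∈ Φ} ∪ {h₁,…,h_ℓ} whose bracket is given, for integer structure constants ε(α,β) with ε(β,α) = −ε(α,β), by: [h_r,h_s] = 0; [h_r,e_α] = ⟨α,α_r∨⟩ e_α where ⟨α,α_r∨⟩ = 2(α,α_r)/(α_r,α_r); [e_α,e_β] = ε(α,β) e_{α+β} if α+β ∈ Φ; [e_α,e_β] = 0 if α+β ∉ Φ∪{0}; and [e_α,e_{−α}] = ε(α,−α) h_α, where h_α = Σᵢ mᵢ hᵢ for α = Σᵢ mᵢ αᵢ. Then for every symmetric ℤᵏ-valued 2-cocycle ω on Φ, the R-bilinear bracket on the free module over the Laurent polynomial ring R = ℂ[I₁^{±1},…,I_k^{±1}] with the same basis, defined by the same relations except that ε(α,β) is replaced by ε(α,β)·I^{ω(α|β)} (where I^m = I₁^{m₁}···I_k^{m_k} for m ∈ ℤᵏ), satisfies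 the Jacobi identity, i.e., defines a Lie algebra over R. -/
open scoped RealInnerProductSpace

/-- A reduced root system `Φ` in a real inner product space `V`:
a finite set of nonzero vectors spanning `V`, closed under the reflections it determines,
with integral Cartan numbers, such that the only multiples of a root in `Φ` are `±α`. -/
structure ReducedRootSystem (V : Type) [NormedAddCommGroup V] [InnerProductSpace ℝ V] :
    Type where
  roots : Set V
  finite : roots.Finite
  nonzero : ∀ α ∈ roots, α ≠ 0
  spans : Submodule.span ℝ roots = ⊤
  reflect_mem : ∀ α ∈ roots, ∀ β ∈ roots, β - (2 * ⟪β, α⟫ / ⟪α, α⟫) • α ∈ roots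
  integral : ∀ α ∈ roots, ∀ β ∈ roots, ∃ n : ℤ, 2 * ⟪β, α⟫ / ⟪α, α⟫ = (n : ℝ)
  reduced : ∀ α ∈ roots, ∀ t : ℝ, t • α ∈ roots → t = 1 ∨ t = -1

variable {V : Type} [NormedAddCommGroup V] [InnerProductSpace ℝ V]

/-- `Φ₀ = Φ ∪ {0}`. -/
def rootsZero (Φ : ReducedRootSystem V) : Set V := insert 0 Φ.roots

/-- The positive roots with respect to a linear functional `f` (nonvanishing on `Φ`). -/
def posRoots (Φ : ReducedRootSystem V) (f : V →ₗ[ℝ] ℝ) : Set V :=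
  {α | α ∈ Φ.roots ∧ 0 < f α}

/-- The simple roots: positive roots that are not the sum of two positive roots. -/
def simpleRoots (Φ : ReducedRootSystem V) (f : V →ₗ[ℝ] ℝ) : Set V :=
  {α | α ∈ posRoots Φ f ∧ ¬ ∃ β ∈ posRoots Φ f, ∃ γ ∈ posRoots Φ f, α = β + γ}

/-- The ring `R = ℂ[I₁^{±1},…,I_k^{±1}]` of Laurent polynomials in `k` variables, realized
as the monoid algebra of `ℤᵏ` over `ℂ`. -/
abbrev MvLaurent (k : ℕ) : Type := AddMonoidAlgebra ℂ (Fin k → ℤ)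

/-- The monomial `c · I^m = c · I₁^{m₁} ⋯ I_k^{m_k}` in `MvLaurent k`. -/
noncomputable def laurentMonomial {k : ℕ} (m : Fin k → ℤ) (c : ℂ) : MvLaurent k :=
  AddMonoidAlgebra.single m c

open Classical in
/-- The deformed bracket on the basis elements of the free `MvLaurent k`-module with basis
`{e_α : α ∈ Φ} ∪ {h₁,…,h_ℓ}`: the same relations as in the Cartan–Weyl basis, except that
the structure constant `ε(α,β)` is replaced by `ε(α,β)·I^{ω(α|β)}`. -/
noncomputable def deformedBracketIdx (Φ : ReducedRootSystem V) (k ℓ : ℕ) (a : Fin ℓ → V)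
    (ε : V → V → ℤ) (ω : V → V → Fin k → ℤ) (m : V → Fin ℓ → ℤ) :
    ↥Φ.roots ⊕ Fin ℓ → ↥Φ.roots ⊕ Fin ℓ → ((↥Φ.roots ⊕ Fin ℓ) →₀ MvLaurent k)
  | Sum.inr _, Sum.inr _ => 0
  | Sum.inr r, Sum.inl α =>
      Finsupp.single (Sum.inl α)
        (algebraMap ℝ (MvLaurent k) (2 * ⟪(α : V), a r⟫ / ⟪a r, a r⟫))
  | Sum.inl α, Sum.inr r =>
      - Finsupp.single (Sum.inl α)
        (algebraMap ℝ (MvLaurent k) (2 * ⟪(α : V), a r⟫ / ⟪a r, a r⟫))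
  | Sum.inl α, Sum.inl β =>
      if hs : (α : V) + (β : V) ∈ Φ.roots then
        Finsupp.single (Sum.inl ⟨(α : V) + (β : V), hs⟩)
          (laurentMonomial (ω (α : V) (β : V)) ((ε (α : V) (β : V) : ℂ)))
      else if (α : V) + (β : V) = 0 then
        ∑ i : Fin ℓ, Finsupp.single (Sum.inr i)
          (laurentMonomial (ω (α : V) (β : V)) ((ε (α : V) (β : V) : ℂ) * (m (α : V) i : ℂ)))
      else 0

/-- The `MvLaurent k`-bilinear extension of the deformed bracket to the free module
`(↥Φ.roots ⊕ Fin ℓ) →₀ MvLaurent k`. -/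
noncomputable def deformedBracket (Φ : ReducedRootSystem V) (k ℓ : ℕ) (a : Fin ℓ → V)
    (ε : V → V → ℤ) (ω : V → V → Fin k → ℤ) (m : V → Fin ℓ → ℤ)
    (x y : (↥Φ.roots ⊕ Fin ℓ) →₀ MvLaurent k) : (↥Φ.roots ⊕ Fin ℓ) →₀ MvLaurent k :=
  x.sum fun i c => y.sum fun j d => (c * d) • deformedBracketIdx Φ k ℓ a ε ω m i j

/-!
Grade the basis of `L` by `e_α ↦ α`, `h_r ↦ 0`. The Cartan–Weyl relations say that the bracket
of basis vectors of degrees `α` and `β` is homogeneous of degree `α + β`, and the deformed bracket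
is the bracket of `L` with the coefficient `I^{ω(α|β)}` inserted. Hence a double bracket
`[[e_i, e_j], e_l]` of degrees `α, β, γ` picks up `I^{ω(α|β) + ω(α+β|γ)}`, and for a symmetric
2-cocycle this exponent is invariant under cyclic permutations of `(α, β, γ)` whenever the
double brackets involved are nonzero. So on basis vectors the deformed Jacobi sum is a monomial
times the Jacobi sum of `L`, and trilinearity does the rest.
-/

theorem jacobi_of_basis {R M ι : Type*} [CommSemiring R] [AddCommMonoid M] [Module R M]
    (B : M →ₗ[R] M →ₗ[R] M) (e : Module.Basis ι R M)
    (h : ∀ i j l, B (B (e i) (e j)) (e l) + B (B (e j) (e l)) (e i) + B (B (e l) (e i)) (e j) = 0)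
    (x y z : M) : B (B x y) z + B (B y z) x + B (B z x) y = 0 := by
  have left : ∀ y z : M, (∀ i, B (B (e i) y) z + B (B y z) (e i) + B (B z (e i)) y = 0) →
      ∀ x, B (B x y) z + B (B y z) x + B (B z x) y = 0 := fun y z hy x => by
    have : B.flip z ∘ₗ B.flip y + B (B y z) + B.flip y ∘ₗ B z = 0 :=
      e.ext fun i => by simpa using hy i
    simpa using LinearMap.congr_fun this x
  have rotate : ∀ x y z : M, B (B x y) z + B (B y z) x + B (B z x) y
      = B (B y z) x + B (B z x) y + B (B x y) z := fun x y z => by abel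
  refine left y z (fun i => ?_) x
  rw [rotate]
  refine left z (e i) (fun j => ?_) y
  rw [rotate]
  refine left (e i) (e j) (fun l => ?_) z
  rw [rotate]
  exact h i j l

theorem lie_lie_add_lie_lie_add_lie_lie {L : Type*} [LieRing L] (x y z : L) :
    ⁅⁅x, y⁆, z⁆ + ⁅⁅y, z⁆, x⁆ + ⁅⁅z, x⁆, y⁆ = 0 := by
  calc ⁅⁅x, y⁆, z⁆ + ⁅⁅y, z⁆, x⁆ + ⁅⁅z, x⁆, y⁆
      = -(⁅x, ⁅y, z⁆⁆ + ⁅y, ⁅z, x⁆⁆ + ⁅z, ⁅x, y⁆⁆) := by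
        rw [← lie_skew ⁅y, z⁆ x, ← lie_skew ⁅z, x⁆ y, ← lie_skew ⁅x, y⁆ z]; abel
    _ = 0 := by rw [lie_jacobi, neg_zero]

section Twist

variable {K G ι : Type*} [CommRing K] [AddCommMonoid G]

noncomputable def twist (w : G) : (ι →₀ K) →ₗ[K] (ι →₀ AddMonoidAlgebra K G) :=
  Finsupp.mapRange.linearMap (AddMonoidAlgebra.lsingle w)

lemma twist_apply (w : G) (y : ι →₀ K) (s : ι) : twist w y s = AddMonoidAlgebra.single w (y s) :=
  rfl

lemma twist_single (w : G) (s : ι) (c : K) :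
    twist w (Finsupp.single s c) = Finsupp.single s (AddMonoidAlgebra.single w c) := by
  simp [twist]

lemma twist_sum_index {M : Type*} [AddCommMonoid M] {g : ι → AddMonoidAlgebra K G → M}
    (hg : ∀ i, g i 0 = 0) (w : G) (y : ι →₀ K) :
    (twist w y).sum g = y.sum fun i c => g i (AddMonoidAlgebra.single w c) :=
  Finsupp.sum_mapRange_index (hf := map_zero _) hg

lemma single_smul_twist (w w' : G) (c : K) (y : ι →₀ K) :
    AddMonoidAlgebra.single w c • twist w' y = twist (w + w') (c • y) := by
  ext s : 1
  simp [twist_apply, AddMonoidAlgebra.single_mul_single]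

lemma twist_congr {w w' : G} {y : ι →₀ K} (h : y ≠ 0 → w = w') : twist w y = twist w' y := by
  by_cases hy : y = 0
  · simp [hy]
  · rw [h hy]

lemma twist_add_twist_add_twist_eq_zero {w₁ w₂ w₃ : G} {y₁ y₂ y₃ : ι →₀ K}
    (hy : y₁ + y₂ + y₃ = 0) (h₁₂ : y₁ ≠ 0 → y₂ ≠ 0 → w₁ = w₂)
    (h₂₃ : y₂ ≠ 0 → y₃ ≠ 0 → w₂ = w₃) (h₃₁ : y₃ ≠ 0 → y₁ ≠ 0 → w₃ = w₁) :
    twist w₁ y₁ + twist w₂ y₂ + twist w₃ y₃ = 0 := by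
  by_cases h₁ : y₁ = 0
  · rw [h₁, zero_add] at hy
    have h₃ : y₃ ≠ 0 → w₂ = w₃ := fun h₃ =>
      h₂₃ (fun h₂ => h₃ (by simpa [h₂] using hy)) h₃
    rw [h₁, map_zero, zero_add, twist_congr fun h => (h₃ h).symm, ← map_add, hy, map_zero]
  · rw [twist_congr (y := y₂) fun h₂ => (h₁₂ h₁ h₂).symm,
      twist_congr (y := y₃) fun h₃ => h₃₁ h₃ h₁, ← map_add, ← map_add, hy, map_zero]

end Twist

section TwistedBracket

open Finsupp

variable {K L ι A G : Type*} [CommRing K] [LieRing L] [LieAlgebra K L] [AddCommMonoid G]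
  (b : Module.Basis ι K L) (ρ : ι → A) (ω : A → A → G)

lemma repr_lie_eq_sum (x y : L) :
    b.repr ⁅x, y⁆ = (b.repr x).sum fun p c => c • b.repr ⁅b p, y⁆ := by
  conv_lhs => rw [← b.linearCombination_repr x]
  simp [linearCombination_apply, Finsupp.sum, sum_lie]

noncomputable def twistedBracket :
    (ι →₀ AddMonoidAlgebra K G) →ₗ[AddMonoidAlgebra K G]
      (ι →₀ AddMonoidAlgebra K G) →ₗ[AddMonoidAlgebra K G] (ι →₀ AddMonoidAlgebra K G) :=
  Finsupp.basisSingleOne.constr (AddMonoidAlgebra K G) fun i =>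
    Finsupp.basisSingleOne.constr (AddMonoidAlgebra K G) fun j =>
      twist (ω (ρ i) (ρ j)) (b.repr ⁅b i, b j⁆)

lemma twistedBracket_single_single (i j : ι) :
    twistedBracket b ρ ω (single i 1) (single j 1)
      = twist (ω (ρ i) (ρ j)) (b.repr ⁅b i, b j⁆) := by
  have hsingle (s : ι) : single s (1 : AddMonoidAlgebra K G) = Finsupp.basisSingleOne s := by simp
  rw [twistedBracket, hsingle, hsingle, Module.Basis.constr_basis, Module.Basis.constr_basis]

lemma twistedBracket_apply (x y : ι →₀ AddMonoidAlgebra K G) :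
    twistedBracket b ρ ω x y = x.sum fun i c => y.sum fun j d =>
      (c * d) • twist (ω (ρ i) (ρ j)) (b.repr ⁅b i, b j⁆) := by
  rw [← LinearMap.sum_repr_mul_repr_mul Finsupp.basisSingleOne Finsupp.basisSingleOne]
  simp [twistedBracket_single_single, mul_smul]

variable {b ρ}

lemma twistedBracket_twist_single {x : L} {v : A} (hx : b.repr x ∈ supported K K (ρ ⁻¹' {v}))
    (w : G) (l : ι) :
    twistedBracket b ρ ω (twist w (b.repr x)) (single l 1)
      = twist (w + ω v (ρ l)) (b.repr ⁅x, b l⁆) := by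
  rw [twistedBracket_apply, twist_sum_index (by simp), repr_lie_eq_sum, map_finsuppSum]
  refine sum_congr fun p hp => ?_
  rw [sum_single_index (by simp), mul_one, single_smul_twist, ← (mem_supported K _).1 hx hp,
    map_smul]

lemma mem_of_repr_mem_supported {S : Set A} (hS : ∀ i, ρ i ∈ S) {x : L} {v : A}
    (hx : b.repr x ∈ supported K K (ρ ⁻¹' {v})) (hx₀ : x ≠ 0) : v ∈ S := by
  obtain ⟨s, hs⟩ := support_nonempty_iff.2 (b.repr.map_ne_zero_iff.2 hx₀)
  rw [← (mem_supported K _).1 hx hs]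
  exact hS s

variable [AddCommMonoid A]

lemma repr_lie_mem_supported
    (hρ : ∀ i j, b.repr ⁅b i, b j⁆ ∈ supported K K (ρ ⁻¹' {ρ i + ρ j}))
    {x : L} {v : A} (hx : b.repr x ∈ supported K K (ρ ⁻¹' {v})) (l : ι) :
    b.repr ⁅x, b l⁆ ∈ supported K K (ρ ⁻¹' {v + ρ l}) := by
  rw [repr_lie_eq_sum]
  refine Submodule.sum_mem _ fun p hp => Submodule.smul_mem _ _ ?_
  rw [← (mem_supported K _).1 hx hp]
  exact hρ p l

end TwistedBracket

section Cocycle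

variable {A G : Type*} [AddCommMonoid A] [AddCommGroup G] {S : Set A} {ω : A → A → G}

lemma cocycle_rotate (hsym : ∀ α ∈ S, ∀ β ∈ S, α + β ∈ S → ω β α = ω α β)
    (hcoc : ∀ α ∈ S, ∀ β ∈ S, ∀ γ ∈ S, α + β ∈ S → β + γ ∈ S → α + β + γ ∈ S →
      ω β γ - ω (α + β) γ + ω α (β + γ) - ω α β = 0)
    {x y z : A} (hx : x ∈ S) (hy : y ∈ S) (hz : z ∈ S) (hxy : x + y ∈ S) (hyz : y + z ∈ S)
    (hxyz : x + y + z ∈ S) :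
    ω x y + ω (x + y) z = ω y z + ω (y + z) x := by
  rw [hsym x hx (y + z) hyz (by rwa [← add_assoc]), eq_comm, ← sub_eq_zero,
    ← hcoc x hx y hy z hz hxy hyz hxyz]
  abel

end Cocycle

section TwistedJacobi

open Finsupp

variable {K L ι A G : Type*} [CommRing K] [LieRing L] [LieAlgebra K L] [AddCommMonoid A]
  [AddCommGroup G] {b : Module.Basis ι K L} {ρ : ι → A} {S : Set A} {ω : A → A → G}

lemma twistedBracket_twistedBracket_single
    (hρ : ∀ i j, b.repr ⁅b i, b j⁆ ∈ supported K K (ρ ⁻¹' {ρ i + ρ j})) (i j l : ι) :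
    twistedBracket b ρ ω (twistedBracket b ρ ω (single i 1) (single j 1)) (single l 1)
      = twist (ω (ρ i) (ρ j) + ω (ρ i + ρ j) (ρ l)) (b.repr ⁅⁅b i, b j⁆, b l⁆) := by
  rw [twistedBracket_single_single, twistedBracket_twist_single ω (hρ i j)]

lemma cocycle_rotate_of_repr_lie_lie_ne_zero (hS : ∀ i, ρ i ∈ S)
    (hρ : ∀ i j, b.repr ⁅b i, b j⁆ ∈ supported K K (ρ ⁻¹' {ρ i + ρ j}))
    (hsym : ∀ α ∈ S, ∀ β ∈ S, α + β ∈ S → ω β α = ω α β)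
    (hcoc : ∀ α ∈ S, ∀ β ∈ S, ∀ γ ∈ S, α + β ∈ S → β + γ ∈ S → α + β + γ ∈ S →
      ω β γ - ω (α + β) γ + ω α (β + γ) - ω α β = 0)
    (i j l : ι) (hijl : b.repr ⁅⁅b i, b j⁆, b l⁆ ≠ 0) (hjli : b.repr ⁅⁅b j, b l⁆, b i⁆ ≠ 0) :
    ω (ρ i) (ρ j) + ω (ρ i + ρ j) (ρ l) = ω (ρ j) (ρ l) + ω (ρ j + ρ l) (ρ i) := by
  have mem_of_ne_zero {i j l : ι} (h : b.repr ⁅⁅b i, b j⁆, b l⁆ ≠ 0) :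
      ρ i + ρ j ∈ S ∧ ρ i + ρ j + ρ l ∈ S := by
    have h' : ⁅⁅b i, b j⁆, b l⁆ ≠ 0 := b.repr.map_ne_zero_iff.1 h
    refine ⟨mem_of_repr_mem_supported hS (hρ i j) fun h₀ => h' ?_,
      mem_of_repr_mem_supported hS (repr_lie_mem_supported hρ (hρ i j) l) h'⟩
    rw [h₀, zero_lie]
  obtain ⟨hij, hijl⟩ := mem_of_ne_zero hijl
  exact cocycle_rotate hsym hcoc (hS i) (hS j) (hS l) hij (mem_of_ne_zero hjli).1 hijl

theorem twistedBracket_jacobi (hS : ∀ i, ρ i ∈ S)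
    (hρ : ∀ i j, b.repr ⁅b i, b j⁆ ∈ supported K K (ρ ⁻¹' {ρ i + ρ j}))
    (hsym : ∀ α ∈ S, ∀ β ∈ S, α + β ∈ S → ω β α = ω α β)
    (hcoc : ∀ α ∈ S, ∀ β ∈ S, ∀ γ ∈ S, α + β ∈ S → β + γ ∈ S → α + β + γ ∈ S →
      ω β γ - ω (α + β) γ + ω α (β + γ) - ω α β = 0)
    (x y z : ι →₀ AddMonoidAlgebra K G) :
    twistedBracket b ρ ω (twistedBracket b ρ ω x y) z
      + twistedBracket b ρ ω (twistedBracket b ρ ω y z) x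
      + twistedBracket b ρ ω (twistedBracket b ρ ω z x) y = 0 := by
  refine jacobi_of_basis _ Finsupp.basisSingleOne (fun i j l => ?_) x y z
  simp only [Finsupp.coe_basisSingleOne, twistedBracket_twistedBracket_single hρ]
  have rotate := cocycle_rotate_of_repr_lie_lie_ne_zero hS hρ hsym hcoc
  refine twist_add_twist_add_twist_eq_zero ?_ (rotate i j l) (rotate j l i) (rotate l i j)
  simpa only [map_add, map_zero] using
    congrArg b.repr (lie_lie_add_lie_lie_add_lie_lie (b i) (b j) (b l))

end TwistedJacobi

structure IsCartanWeylBasis (Φ : ReducedRootSystem V) {ℓ : ℕ} (a : Fin ℓ → V) (ε : V → V → ℤ)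
    (m : V → Fin ℓ → ℤ) {L : Type} [LieRing L] [LieAlgebra ℂ L]
    (b : Module.Basis (↥Φ.roots ⊕ Fin ℓ) ℂ L) : Prop where
  lie_h_h : ∀ r s : Fin ℓ, ⁅b (Sum.inr r), b (Sum.inr s)⁆ = 0
  lie_h_e : ∀ (r : Fin ℓ) (α : ↥Φ.roots),
    ⁅b (Sum.inr r), b (Sum.inl α)⁆ = ((2 * ⟪(α : V), a r⟫ / ⟪a r, a r⟫ : ℝ) : ℂ) • b (Sum.inl α)
  lie_e_e_of_add_mem : ∀ (α β : ↥Φ.roots) (hs : (α : V) + (β : V) ∈ Φ.roots),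
    ⁅b (Sum.inl α), b (Sum.inl β)⁆
      = (ε (α : V) (β : V) : ℂ) • b (Sum.inl ⟨(α : V) + (β : V), hs⟩)
  lie_e_e_of_add_notMem : ∀ α β : ↥Φ.roots, (α : V) + (β : V) ∉ rootsZero Φ →
    ⁅b (Sum.inl α), b (Sum.inl β)⁆ = 0
  lie_e_e_of_add_eq_zero : ∀ α β : ↥Φ.roots, (α : V) + (β : V) = 0 →
    ⁅b (Sum.inl α), b (Sum.inl β)⁆
      = (ε (α : V) (β : V) : ℂ) • ∑ i : Fin ℓ, (m (α : V) i : ℂ) • b (Sum.inr i)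

def basisRoot (Φ : ReducedRootSystem V) (ℓ : ℕ) : ↥Φ.roots ⊕ Fin ℓ → V :=
  Sum.elim Subtype.val 0

lemma basisRoot_mem_rootsZero (Φ : ReducedRootSystem V) (ℓ : ℕ) (s : ↥Φ.roots ⊕ Fin ℓ) :
    basisRoot Φ ℓ s ∈ rootsZero Φ := by
  rcases s with α | r
  · exact Set.mem_insert_of_mem _ α.2
  · exact Set.mem_insert _ _

lemma algebraMap_real_mvLaurent {k : ℕ} (t : ℝ) :
    algebraMap ℝ (MvLaurent k) t = AddMonoidAlgebra.single 0 (t : ℂ) := by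
  rw [IsScalarTower.algebraMap_apply ℝ ℂ (MvLaurent k)]
  rfl

section CartanWeyl

open Finsupp

variable {Φ : ReducedRootSystem V} {k ℓ : ℕ} {a : Fin ℓ → V} {ε : V → V → ℤ}
  {ω : V → V → Fin k → ℤ} {m : V → Fin ℓ → ℤ} {L : Type} [LieRing L] [LieAlgebra ℂ L]
  {b : Module.Basis (↥Φ.roots ⊕ Fin ℓ) ℂ L}

lemma IsCartanWeylBasis.repr_lie_mem_supported (hb : IsCartanWeylBasis Φ a ε m b)
    (i j : ↥Φ.roots ⊕ Fin ℓ) :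
    b.repr ⁅b i, b j⁆
      ∈ supported ℂ ℂ (basisRoot Φ ℓ ⁻¹' {basisRoot Φ ℓ i + basisRoot Φ ℓ j}) := by
  rcases i with α | r <;> rcases j with β | s
  · by_cases hs : (α : V) + (β : V) ∈ Φ.roots
    · rw [hb.lie_e_e_of_add_mem α β hs, map_smul, b.repr_self]
      exact Submodule.smul_mem _ _ (single_mem_supported ℂ _ rfl)
    by_cases h0 : (α : V) + (β : V) = 0
    · rw [hb.lie_e_e_of_add_eq_zero α β h0, map_smul, map_sum]
      refine Submodule.smul_mem _ _ (Submodule.sum_mem _ fun i _ => ?_)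
      rw [map_smul, b.repr_self]
      exact Submodule.smul_mem _ _ (single_mem_supported ℂ _ h0.symm)
    · rw [hb.lie_e_e_of_add_notMem α β (by simp [rootsZero, hs, h0]), map_zero]
      exact Submodule.zero_mem _
  · rw [← lie_skew, hb.lie_h_e, map_neg, map_smul, b.repr_self]
    exact Submodule.neg_mem _
      (Submodule.smul_mem _ _ (single_mem_supported ℂ _ (by simp [basisRoot])))
  · rw [hb.lie_h_e, map_smul, b.repr_self]
    exact Submodule.smul_mem _ _ (single_mem_supported ℂ _ (by simp [basisRoot]))
  · rw [hb.lie_h_h, map_zero]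
    exact Submodule.zero_mem _

lemma IsCartanWeylBasis.deformedBracketIdx_eq_twist (hb : IsCartanWeylBasis Φ a ε m b)
    (hω : ∀ v : V, ω 0 v = 0) (hω' : ∀ v : V, ω v 0 = 0) (i j : ↥Φ.roots ⊕ Fin ℓ) :
    deformedBracketIdx Φ k ℓ a ε ω m i j
      = twist (ω (basisRoot Φ ℓ i) (basisRoot Φ ℓ j)) (b.repr ⁅b i, b j⁆) := by
  rcases i with α | r <;> rcases j with β | s
  · simp only [deformedBracketIdx, basisRoot, Sum.elim_inl]
    split_ifs with hs h0
    · simp [hb.lie_e_e_of_add_mem α β hs, twist_single, laurentMonomial]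
    · simp only [hb.lie_e_e_of_add_eq_zero α β h0, map_smul, map_sum, b.repr_self, smul_single,
        smul_eq_mul, mul_one, Finset.smul_sum, twist_single, laurentMonomial]
    · rw [hb.lie_e_e_of_add_notMem α β (by simp [rootsZero, hs, h0]), map_zero, map_zero]
  · rw [← lie_skew, hb.lie_h_e]
    simp [deformedBracketIdx, basisRoot, hω', twist_single, algebraMap_real_mvLaurent]
  · simp [deformedBracketIdx, basisRoot, hb.lie_h_e, hω, twist_single, algebraMap_real_mvLaurent]
  · simp [deformedBracketIdx, hb.lie_h_h]

lemma IsCartanWeylBasis.deformedBracket_eq_twistedBracket (hb : IsCartanWeylBasis Φ a ε m b)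
    (hω : ∀ v : V, ω 0 v = 0) (hω' : ∀ v : V, ω v 0 = 0) :
    deformedBracket Φ k ℓ a ε ω m = fun x y => twistedBracket b (basisRoot Φ ℓ) ω x y := by
  funext x y
  rw [twistedBracket_apply]
  simp only [deformedBracket, hb.deformedBracketIdx_eq_twist hω hω']

end CartanWeyl

theorem deformed_bracket_jacobi_general
    {V : Type} [NormedAddCommGroup V] [InnerProductSpace ℝ V]
    (Φ : ReducedRootSystem V) (ℓ : ℕ) (a : Fin ℓ → V) (ε : V → V → ℤ) (m : V → Fin ℓ → ℤ)
    (L : Type) [LieRing L] [LieAlgebra ℂ L]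
    (b : Module.Basis (↥Φ.roots ⊕ Fin ℓ) ℂ L)
    (hHH : ∀ r s : Fin ℓ, ⁅b (Sum.inr r), b (Sum.inr s)⁆ = 0)
    (hHE : ∀ (r : Fin ℓ) (α : ↥Φ.roots),
      ⁅b (Sum.inr r), b (Sum.inl α)⁆
        = ((2 * ⟪(α : V), a r⟫ / ⟪a r, a r⟫ : ℝ) : ℂ) • b (Sum.inl α))
    (hEE : ∀ (α β : ↥Φ.roots) (hs : (α : V) + (β : V) ∈ Φ.roots),
      ⁅b (Sum.inl α), b (Sum.inl β)⁆
        = (ε (α : V) (β : V) : ℂ) • b (Sum.inl ⟨(α : V) + (β : V), hs⟩))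
    (hEE0 : ∀ α β : ↥Φ.roots, (α : V) + (β : V) ∉ rootsZero Φ →
      ⁅b (Sum.inl α), b (Sum.inl β)⁆ = 0)
    (hEneg : ∀ α β : ↥Φ.roots, (α : V) + (β : V) = 0 →
      ⁅b (Sum.inl α), b (Sum.inl β)⁆
        = (ε (α : V) (β : V) : ℂ) • ∑ i : Fin ℓ, (m (α : V) i : ℂ) • b (Sum.inr i))
    (k : ℕ) (ω : V → V → Fin k → ℤ)
    (hω : ∀ v : V, ω 0 v = 0) (hω' : ∀ v : V, ω v 0 = 0)
    (hsym : ∀ α ∈ rootsZero Φ, ∀ β ∈ rootsZero Φ, α + β ∈ rootsZero Φ → ω β α = ω α β)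
    (hcoc : ∀ α ∈ rootsZero Φ, ∀ β ∈ rootsZero Φ, ∀ γ ∈ rootsZero Φ,
      α + β ∈ rootsZero Φ → β + γ ∈ rootsZero Φ → α + β + γ ∈ rootsZero Φ →
      ω β γ - ω (α + β) γ + ω α (β + γ) - ω α β = 0) :
    ∀ x y z : (↥Φ.roots ⊕ Fin ℓ) →₀ MvLaurent k,
      deformedBracket Φ k ℓ a ε ω m (deformedBracket Φ k ℓ a ε ω m x y) z
        + deformedBracket Φ k ℓ a ε ω m (deformedBracket Φ k ℓ a ε ω m y z) x
        + deformedBracket Φ k ℓ a ε ω m (deformedBracket Φ k ℓ a ε ω m z x) y = 0 := by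
  have hb : IsCartanWeylBasis Φ a ε m b := ⟨hHH, hHE, hEE, hEE0, hEneg⟩
  rw [hb.deformedBracket_eq_twistedBracket hω hω']
  exact twistedBracket_jacobi (basisRoot_mem_rootsZero Φ ℓ) hb.repr_lie_mem_supported hsym hcoc

/-- Let `Φ` be a reduced root system with positive roots `Φ⁺` and simple
roots `Δ = {α₁,…,α_ℓ}` (cut out by a linear functional `f`), and let `𝔤 = L` be a complex
Lie algebra with basis `{e_α : α ∈ Φ} ∪ {h₁,…,h_ℓ}` whose bracket is given, for integer
structure constants `ε(α,β)` with `ε(β,α) = -ε(α,β)`, by the Cartan–Weyl relations.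
Then for every symmetric `ℤᵏ`-valued 2-cocycle `ω` on `Φ`, the `R`-bilinear bracket on the
free module over `R = ℂ[I₁^{±1},…,I_k^{±1}]` with the same basis, given by the same
relations with `ε(α,β)` replaced by `ε(α,β)·I^{ω(α|β)}`, satisfies the Jacobi identity. -/
theorem deformed_bracket_jacobi
    {V : Type} [NormedAddCommGroup V] [InnerProductSpace ℝ V] [FiniteDimensional ℝ V]
    (Φ : ReducedRootSystem V) (f : V →ₗ[ℝ] ℝ) (hf : ∀ α ∈ Φ.roots, f α ≠ 0)
    (ℓ : ℕ) (a : Fin ℓ → V) (haInj : Function.Injective a)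
    (haRange : Set.range a = simpleRoots Φ f)
    (ε : V → V → ℤ) (hskew : ∀ α β : V, ε β α = - ε α β)
    (m : V → Fin ℓ → ℤ) (hm : ∀ α ∈ Φ.roots, α = ∑ i : Fin ℓ, (m α i : ℝ) • a i)
    (L : Type) [LieRing L] [LieAlgebra ℂ L]
    (b : Module.Basis (↥Φ.roots ⊕ Fin ℓ) ℂ L)
    (hHH : ∀ r s : Fin ℓ, ⁅b (Sum.inr r), b (Sum.inr s)⁆ = 0)
    (hHE : ∀ (r : Fin ℓ) (α : ↥Φ.roots),
      ⁅b (Sum.inr r), b (Sum.inl α)⁆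
        = ((2 * ⟪(α : V), a r⟫ / ⟪a r, a r⟫ : ℝ) : ℂ) • b (Sum.inl α))
    (hEE : ∀ (α β : ↥Φ.roots) (hs : (α : V) + (β : V) ∈ Φ.roots),
      ⁅b (Sum.inl α), b (Sum.inl β)⁆
        = (ε (α : V) (β : V) : ℂ) • b (Sum.inl ⟨(α : V) + (β : V), hs⟩))
    (hEE0 : ∀ α β : ↥Φ.roots, (α : V) + (β : V) ∉ rootsZero Φ →
      ⁅b (Sum.inl α), b (Sum.inl β)⁆ = 0)
    (hEneg : ∀ α β : ↥Φ.roots, (α : V) + (β : V) = 0 →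
      ⁅b (Sum.inl α), b (Sum.inl β)⁆
        = (ε (α : V) (β : V) : ℂ) • ∑ i : Fin ℓ, (m (α : V) i : ℂ) • b (Sum.inr i))
    (k : ℕ) (ω : V → V → Fin k → ℤ)
    (hω : ∀ v : V, ω 0 v = 0) (hω' : ∀ v : V, ω v 0 = 0)
    (hsym : ∀ α ∈ rootsZero Φ, ∀ β ∈ rootsZero Φ, α + β ∈ rootsZero Φ → ω β α = ω α β)
    (hcoc : ∀ α ∈ rootsZero Φ, ∀ β ∈ rootsZero Φ, ∀ γ ∈ rootsZero Φ,
      α + β ∈ rootsZero Φ → β + γ ∈ rootsZero Φ → α + β + γ ∈ rootsZero Φ →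
      ω β γ - ω (α + β) γ + ω α (β + γ) - ω α β = 0) :
    ∀ x y z : (↥Φ.roots ⊕ Fin ℓ) →₀ MvLaurent k,
      deformedBracket Φ k ℓ a ε ω m (deformedBracket Φ k ℓ a ε ω m x y) z
        + deformedBracket Φ k ℓ a ε ω m (deformedBracket Φ k ℓ a ε ω m y z) x
        + deformedBracket Φ k ℓ a ε ω m (deformedBracket Φ k ℓ a ε ω m z x) y = 0 :=
  deformed_bracket_jacobi_general Φ ℓ a ε m L b hHH hHE hEE hEE0 hEneg k ω hω hω' hsym hcoc
end

section
/- Let Φ be a reduced root system. The boundary operator ∂ⁿ on root-system chains satisfies ∂ⁿ ∘ ∂ⁿ⁺¹ = 0 as a map C_{n+2}(Φ) → C_n(Φ), for every n ≥ 1; moreover ∂ⁿ is well defined on chains, i.e., it sends every tuple with some entry equal to 0 to the zero chain. -/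
open scoped RealInnerProductSpace

variable {V : Type} [NormedAddCommGroup V] [InnerProductSpace ℝ V]

/-- Contraction of a tuple at position `j` (adding the `j`-th and `(j+1)`-st entries). -/
def contractAt (l : List V) (j : ℕ) : List V :=
  l.take j ++ (l.getD j 0 + l.getD (j + 1) 0) :: l.drop (j + 2)

/-- `IsRootChainAux Φ n l`: the tuple `l` of length `n` is a generator of `T_n(Φ)`:
`T₁(Φ) = Φ₀`, and an `n`-tuple with entries in `Φ₀` lies in `T_n(Φ)` iff all its
contractions lie in `T_{n-1}(Φ)`. -/
def IsRootChainAux (Φ : ReducedRootSystem V) : ℕ → List V → Prop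
  | 0, _ => False
  | 1, l => ∃ r ∈ rootsZero Φ, l = [r]
  | n + 2, l => l.length = n + 2 ∧ (∀ r ∈ l, r ∈ rootsZero Φ) ∧
      ∀ j, j + 1 < l.length → IsRootChainAux Φ (n + 1) (contractAt l j)

/-- `l` is a generator of `T_{l.length}(Φ)`. -/
def IsRootChain (Φ : ReducedRootSystem V) (l : List V) : Prop := IsRootChainAux Φ l.length l

open Classical in
/-- The chain generator associated with a tuple, in the free ℤ-module on tuples;
tuples containing `0` are identified with the zero chain. -/
noncomputable def chainGen (l : List V) : List V →₀ ℤ :=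
  if (0 : V) ∈ l then 0 else Finsupp.single l 1

/-- The boundary of a generator:
`∂ⁿ[r₀|⋯|rₙ] = [r₁|⋯|rₙ] + ∑_{j=1}^n (-1)^j [r₀|⋯|r_{j-1}+rⱼ|⋯|rₙ] - (-1)^n [r₀|⋯|r_{n-1}]`. -/
noncomputable def bdGen (l : List V) : List V →₀ ℤ :=
  chainGen l.tail
    + (∑ j ∈ Finset.range (l.length - 1), ((-1 : ℤ) ^ (j + 1)) • chainGen (contractAt l j))
    - ((-1 : ℤ) ^ (l.length - 1)) • chainGen l.dropLast

/-- The boundary operator, extended ℤ-linearly. -/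
noncomputable def bd : (List V →₀ ℤ) →ₗ[ℤ] (List V →₀ ℤ) :=
  Finsupp.lsum ℤ fun l => LinearMap.toSpanSingleton ℤ (List V →₀ ℤ) (bdGen l)

/-- `C_n(Φ)`: the ℤ-linear span of the generators of `T_n(Φ)`. -/
noncomputable def chainMod (Φ : ReducedRootSystem V) (n : ℕ) : Submodule ℤ (List V →₀ ℤ) :=
  Submodule.span ℤ {x | ∃ l : List V, l.length = n ∧ IsRootChain Φ l ∧ x = chainGen l}

/-!
Before tuples containing `0` are identified with `0`, the boundary is the bar differential
`barBd` on all tuples, and `bd = toChain ∘ barBd`, where `toChain` kills the tuples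
containing `0`. Splitting off the first entry gives `∂(a :: x) = L_a x - a :: ∂x`, where `L_a`
collects the first two faces and one correction term; as `L_a` commutes with `∂`, induction on
the length gives `∂∂ = 0`. The same recursion shows that `∂` maps degenerate tuples to
combinations of degenerate tuples, so `toChain ∘ barBd ∘ toChain = toChain ∘ barBd`, whence
`bd ∘ bd = toChain ∘ barBd ∘ barBd = 0`.
-/

section

omit [InnerProductSpace ℝ V]

open Finsupp

theorem chainGen_of_mem {l : List V} (h : (0 : V) ∈ l) : chainGen l = 0 := by
  rw [chainGen, if_pos h]

theorem chainGen_of_notMem {l : List V} (h : (0 : V) ∉ l) : chainGen l = single l 1 := by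
  rw [chainGen, if_neg h]

theorem contractAt_cons_zero (a : V) (m : List V) :
    contractAt (a :: m) 0 = (a + m.getD 0 0) :: m.tail := by
  simp [contractAt, List.drop_one]

theorem contractAt_cons_succ (a : V) (m : List V) (j : ℕ) :
    contractAt (a :: m) (j + 1) = a :: contractAt m j := by
  simp [contractAt]

theorem linearMap_ext_single_one {α M : Type*} [AddCommGroup M] [Module ℤ M]
    {φ ψ : (α →₀ ℤ) →ₗ[ℤ] M} (h : ∀ a, φ (single a 1) = ψ (single a 1)) : φ = ψ :=
  lhom_ext' fun a => LinearMap.ext_ring (h a)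

def degenerateChains : Submodule ℤ (List V →₀ ℤ) := supported ℤ ℤ {l | (0 : V) ∈ l}

theorem single_mem_degenerateChains {l : List V} (h : (0 : V) ∈ l) :
    single l 1 ∈ degenerateChains := single_mem_supported ℤ 1 h

theorem map_mem_degenerateChains {f : (List V →₀ ℤ) →ₗ[ℤ] (List V →₀ ℤ)}
    (hf : ∀ l : List V, (0 : V) ∈ l → f (single l 1) ∈ degenerateChains)
    {x : List V →₀ ℤ} (hx : x ∈ degenerateChains) : f x ∈ degenerateChains := by
  rw [degenerateChains, supported_eq_span_single] at hx
  induction hx using Submodule.span_induction with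
  | mem y hy => obtain ⟨l, hl, rfl⟩ := hy; exact hf l hl
  | zero => simp
  | add y z _ _ hy hz => simpa using add_mem hy hz
  | smul k y _ hy => simpa using Submodule.smul_mem _ k hy

noncomputable def toChain : (List V →₀ ℤ) →ₗ[ℤ] (List V →₀ ℤ) :=
  linearCombination ℤ chainGen

theorem toChain_single (l : List V) : toChain (single l 1) = chainGen l := by
  simp [toChain]

theorem degenerateChains_le_ker_toChain : degenerateChains ≤ LinearMap.ker (toChain (V := V)) := by
  rw [degenerateChains, supported_eq_span_single, Submodule.span_le]
  rintro _ ⟨l, hl, rfl⟩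
  simp [toChain_single, chainGen_of_mem hl]

theorem toChain_sub_mem_degenerateChains (x : List V →₀ ℤ) :
    toChain x - x ∈ degenerateChains := by
  induction x using Finsupp.induction_linear with
  | zero => simp
  | add y z hy hz => simpa [add_sub_add_comm] using add_mem hy hz
  | single l k =>
    rw [← smul_single_one, map_smul, toChain_single, ← smul_sub]
    refine Submodule.smul_mem _ k ?_
    by_cases hl : (0 : V) ∈ l
    · simpa [chainGen_of_mem hl] using single_mem_degenerateChains hl
    · simp [chainGen_of_notMem hl]

noncomputable def prepend {α : Type*} (a : α) : (List α →₀ ℤ) →ₗ[ℤ] (List α →₀ ℤ) :=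
  lmapDomain ℤ ℤ (List.cons a)

theorem prepend_single {α : Type*} (a : α) (l : List α) :
    prepend a (single l 1) = single (a :: l) 1 := by
  simp [prepend]

theorem prepend_mem_degenerateChains (a : V) {x : List V →₀ ℤ} (hx : x ∈ degenerateChains) :
    prepend a x ∈ degenerateChains :=
  supported_comap_lmapDomain ℤ ℤ _ _ (supported_mono (fun _ => List.mem_cons_of_mem a) hx)

theorem prepend_zero_mem_degenerateChains (x : List V →₀ ℤ) :
    prepend 0 x ∈ degenerateChains :=
  supported_comap_lmapDomain ℤ ℤ _ _ (by simp [Set.preimage, supported_univ] :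
    x ∈ supported ℤ ℤ (List.cons (0 : V) ⁻¹' {l | (0 : V) ∈ l}))

/-- The first two faces of `a :: m`, plus `a :: m.tail` to cancel `a` prepended to the first
face of `m`. -/
noncomputable def leadingFacesGen (a : V) : List V → (List V →₀ ℤ)
  | [] => 0
  | h :: t => single (h :: t) 1 - single ((a + h) :: t) 1 + single (a :: t) 1

noncomputable def leadingFaces (a : V) : (List V →₀ ℤ) →ₗ[ℤ] (List V →₀ ℤ) :=
  linearCombination ℤ (leadingFacesGen a)

theorem leadingFaces_single (a : V) (l : List V) :
    leadingFaces a (single l 1) = leadingFacesGen a l := by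
  simp [leadingFaces]

theorem leadingFaces_prepend (a h : V) (x : List V →₀ ℤ) :
    leadingFaces a (prepend h x) = prepend h x - prepend (a + h) x + prepend a x := by
  suffices (leadingFaces a).comp (prepend h) = prepend h - prepend (a + h) + prepend a from
    LinearMap.congr_fun this x
  refine linearMap_ext_single_one fun t => ?_
  simp [prepend_single, leadingFaces_single, leadingFacesGen]

theorem leadingFaces_leadingFaces (a h : V) (x : List V →₀ ℤ) :
    leadingFaces a (leadingFaces h x) =
      leadingFaces h x - leadingFaces (a + h) x + leadingFaces a x := by
  suffices (leadingFaces a).comp (leadingFaces h) =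
      leadingFaces h - leadingFaces (a + h) + leadingFaces a from LinearMap.congr_fun this x
  refine linearMap_ext_single_one fun l => ?_
  cases l with
  | nil => simp [leadingFaces_single, leadingFacesGen]
  | cons x t =>
    simp only [LinearMap.comp_apply, LinearMap.add_apply, LinearMap.sub_apply,
      leadingFaces_single, leadingFacesGen, map_add, map_sub, add_assoc]
    abel

theorem leadingFaces_mem_degenerateChains (a : V) {x : List V →₀ ℤ}
    (hx : x ∈ degenerateChains) : leadingFaces a x ∈ degenerateChains := by
  refine map_mem_degenerateChains (fun l hl => ?_) hx
  rcases l with _ | ⟨h, t⟩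
  · simp at hl
  rw [leadingFaces_single, leadingFacesGen]
  rcases List.mem_cons.mp hl with rfl | ht
  · simpa using single_mem_degenerateChains (List.mem_cons_self (a := (0 : V)) (l := t))
  · have hdeg (b : V) := single_mem_degenerateChains (List.mem_cons_of_mem b ht)
    exact add_mem (sub_mem (hdeg h) (hdeg (a + h))) (hdeg a)

theorem leadingFaces_zero_mem_degenerateChains (x : List V →₀ ℤ) :
    leadingFaces 0 x ∈ degenerateChains := by
  induction x using Finsupp.induction_linear with
  | zero => simp
  | add y z hy hz => simpa using add_mem hy hz
  | single l k =>
    rw [← smul_single_one, map_smul]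
    refine Submodule.smul_mem _ k ?_
    rcases l with _ | ⟨h, t⟩
    · simp [leadingFaces_single, leadingFacesGen]
    · simpa [leadingFaces_single, leadingFacesGen] using
        single_mem_degenerateChains (List.mem_cons_self (a := (0 : V)) (l := t))

noncomputable def barBdGen (l : List V) : List V →₀ ℤ :=
  single l.tail 1
    + (∑ j ∈ Finset.range (l.length - 1), ((-1 : ℤ) ^ (j + 1)) • single (contractAt l j) 1)
    - ((-1 : ℤ) ^ (l.length - 1)) • single l.dropLast 1

noncomputable def barBd : (List V →₀ ℤ) →ₗ[ℤ] (List V →₀ ℤ) :=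
  linearCombination ℤ barBdGen

theorem barBd_single (l : List V) : barBd (single l 1) = barBdGen l := by
  simp [barBd]

theorem barBdGen_nil : barBdGen ([] : List V) = 0 := by
  simp [barBdGen]

theorem bdGen_eq_toChain_barBdGen (l : List V) : bdGen l = toChain (barBdGen l) := by
  simp only [bdGen, barBdGen, map_sub, map_add, map_sum, map_smul, toChain_single]

theorem bd_eq_toChain_comp_barBd : bd = toChain.comp (barBd (V := V)) :=
  linearMap_ext_single_one fun l => by
    simp [bd, barBd_single, bdGen_eq_toChain_barBdGen]

theorem barBdGen_cons (a : V) (m : List V) :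
    barBdGen (a :: m) = leadingFaces a (single m 1) - prepend a (barBdGen m) := by
  rcases m with _ | ⟨h, t⟩
  · simp [barBdGen, leadingFaces_single, leadingFacesGen]
  simp only [barBdGen, List.length_cons, Nat.add_sub_cancel, List.tail_cons,
    List.dropLast_cons_of_ne_nil (List.cons_ne_nil h t), map_sub, map_add, map_sum, map_smul,
    prepend_single, leadingFaces_single, leadingFacesGen]
  rw [Finset.sum_range_succ']
  simp only [contractAt_cons_succ, contractAt_cons_zero, List.getD_cons_zero, List.tail_cons,
    pow_succ, pow_zero, mul_neg_one, neg_neg, neg_smul, one_smul,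
    Finset.sum_neg_distrib]
  abel

theorem barBd_prepend (a : V) (x : List V →₀ ℤ) :
    barBd (prepend a x) = leadingFaces a x - prepend a (barBd x) := by
  suffices barBd.comp (prepend a) = leadingFaces a - (prepend a).comp barBd from
    LinearMap.congr_fun this x
  exact linearMap_ext_single_one fun l => by
    simp [prepend_single, barBd_single, barBdGen_cons]

theorem barBd_leadingFaces (a : V) (x : List V →₀ ℤ) :
    barBd (leadingFaces a x) = leadingFaces a (barBd x) := by
  suffices barBd.comp (leadingFaces a) = (leadingFaces a).comp barBd from
    LinearMap.congr_fun this x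
  refine linearMap_ext_single_one fun l => ?_
  rcases l with _ | ⟨h, t⟩
  · simp [leadingFaces_single, leadingFacesGen, barBd_single, barBdGen_nil]
  rw [LinearMap.comp_apply, LinearMap.comp_apply, ← prepend_single]
  simp only [leadingFaces_prepend, barBd_prepend, leadingFaces_leadingFaces, map_add, map_sub]
  abel

theorem barBd_barBd (x : List V →₀ ℤ) : barBd (barBd x) = 0 := by
  suffices barBd.comp (barBd (V := V)) = 0 from LinearMap.congr_fun this x
  refine linearMap_ext_single_one fun l => ?_
  induction l with
  | nil => simp [barBd_single, barBdGen_nil]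
  | cons a m ih =>
    simp only [LinearMap.comp_apply, LinearMap.zero_apply] at ih ⊢
    rw [barBd_single, barBdGen_cons, ← barBd_single, map_sub, barBd_leadingFaces, barBd_prepend,
      ih, map_zero, sub_zero, sub_self]

theorem barBd_mem_degenerateChains {x : List V →₀ ℤ} (hx : x ∈ degenerateChains) :
    barBd x ∈ degenerateChains := by
  refine map_mem_degenerateChains (fun l hl => ?_) hx
  induction l with
  | nil => simp at hl
  | cons a m ih =>
    rw [barBd_single, barBdGen_cons]
    by_cases ha : a = 0
    · subst ha
      exact sub_mem (leadingFaces_zero_mem_degenerateChains _)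
        (prepend_zero_mem_degenerateChains _)
    · have hm : (0 : V) ∈ m := (List.mem_cons.mp hl).resolve_left (Ne.symm ha)
      exact sub_mem (leadingFaces_mem_degenerateChains a (single_mem_degenerateChains hm))
        (prepend_mem_degenerateChains a (barBd_single m ▸ ih hm))

theorem toChain_barBd_toChain (x : List V →₀ ℤ) :
    toChain (barBd (toChain x)) = toChain (barBd x) := by
  rw [← sub_eq_zero, ← map_sub, ← map_sub]
  exact degenerateChains_le_ker_toChain
    (barBd_mem_degenerateChains (toChain_sub_mem_degenerateChains x))

theorem bd_bd (x : List V →₀ ℤ) : bd (bd x) = 0 := by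
  simp only [bd_eq_toChain_comp_barBd, LinearMap.comp_apply, toChain_barBd_toChain, barBd_barBd,
    map_zero]

theorem bdGen_eq_zero_of_mem {l : List V} (h : (0 : V) ∈ l) : bdGen l = 0 := by
  rw [bdGen_eq_toChain_barBdGen, ← barBd_single]
  exact degenerateChains_le_ker_toChain (barBd_mem_degenerateChains (single_mem_degenerateChains h))

end

theorem boundary_squared_eq_zero_general
    {V : Type} [NormedAddCommGroup V] [InnerProductSpace ℝ V]
    (Φ : ReducedRootSystem V) (n : ℕ) :
    (∀ x ∈ chainMod Φ (n + 2), bd (bd x) = 0) ∧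
    (∀ l : List V, l.length = n + 1 → (0 : V) ∈ l → bdGen l = 0) :=
  ⟨fun x _ => bd_bd x, fun _ _ => bdGen_eq_zero_of_mem⟩

/-- The boundary operator on root-system chains satisfies
`∂ⁿ ∘ ∂ⁿ⁺¹ = 0` as a map `C_{n+2}(Φ) → C_n(Φ)` for every `n ≥ 1`; moreover `∂` is well
defined on chains: it sends every tuple with some entry equal to `0` to the zero chain. -/
theorem boundary_squared_eq_zero
    {V : Type} [NormedAddCommGroup V] [InnerProductSpace ℝ V] [FiniteDimensional ℝ V]
    (Φ : ReducedRootSystem V) (n : ℕ) (hn : 1 ≤ n) :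
    (∀ x ∈ chainMod Φ (n + 2), bd (bd x) = 0) ∧
    (∀ l : List V, l.length = n + 1 → (0 : V) ∈ l → bdGen l = 0) :=
  boundary_squared_eq_zero_general Φ n
end

section
/- Let Φ be a reduced root system with positive roots Φ⁺ and simple roots Δ, and let αᵢ, αⱼ ∈ Δ be distinct simple roots. If β ∈ Φ is a root such that β − αᵢ and β − αⱼ are each either roots or zero, then β − αᵢ − αⱼ is a root or zero. -/
open scoped RealInnerProductSpace

variable {V : Type} [NormedAddCommGroup V] [InnerProductSpace ℝ V]

namespace ReducedRootSystem

variable (Φ : ReducedRootSystem V)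

lemma neg_mem {α : V} (hα : α ∈ Φ.roots) : -α ∈ Φ.roots := by
  have hαα : ⟪α, α⟫ ≠ 0 := inner_self_ne_zero.mpr (Φ.nonzero α hα)
  have h := Φ.reflect_mem α hα α hα
  rwa [mul_div_assoc, div_self hαα, mul_one, two_smul, sub_add_cancel_left] at h

lemma sub_mem_of_cartan_eq_one {α β : V} (hα : α ∈ Φ.roots) (hβ : β ∈ Φ.roots)
    (h : 2 * ⟪α, β⟫ / ⟪β, β⟫ = 1) : α - β ∈ Φ.roots := by
  have hrefl := Φ.reflect_mem β hβ α hα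
  rwa [h, one_smul] at hrefl

/-- A positive Cartan integer is `1` or at least `2`; the latter reads `⟪β, β⟫ ≤ ⟪α, β⟫`. -/
lemma cartan_eq_one_or_inner_self_le {α β : V} (hα : α ∈ Φ.roots) (hβ : β ∈ Φ.roots)
    (hpos : 0 < ⟪α, β⟫) : 2 * ⟪α, β⟫ / ⟪β, β⟫ = 1 ∨ ⟪β, β⟫ ≤ ⟪α, β⟫ := by
  have hββ : 0 < ⟪β, β⟫ := real_inner_self_pos.mpr (Φ.nonzero β hβ)
  obtain ⟨n, hn⟩ := Φ.integral β hβ α hα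
  have hn_pos : 0 < n := by
    have : (0 : ℝ) < n := hn ▸ div_pos (by linarith) hββ
    exact_mod_cast this
  rcases (Int.add_one_le_iff.mpr hn_pos).eq_or_lt with h1 | h2
  · left
    rw [hn, ← h1]
    norm_num
  · right
    have : (2 : ℝ) ≤ 2 * ⟪α, β⟫ / ⟪β, β⟫ := by
      rw [hn]
      exact_mod_cast h2
    rw [le_div_iff₀ hββ] at this
    linarith

lemma sub_mem_rootsZero_of_inner_pos {α β : V} (hα : α ∈ Φ.roots) (hβ : β ∈ Φ.roots)
    (hpos : 0 < ⟪α, β⟫) : α - β ∈ rootsZero Φ := by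
  rcases Φ.cartan_eq_one_or_inner_self_le hα hβ hpos with hαβ | hβ_le
  · exact Or.inr (Φ.sub_mem_of_cartan_eq_one hα hβ hαβ)
  rcases Φ.cartan_eq_one_or_inner_self_le hβ hα (real_inner_comm α β ▸ hpos) with hβα | hα_le
  · right
    simpa using Φ.neg_mem (Φ.sub_mem_of_cartan_eq_one hβ hα hβα)
  · left
    rw [real_inner_comm α β] at hα_le
    have : ⟪α - β, α - β⟫ ≤ 0 := by
      rw [real_inner_sub_sub_self]
      linarith
    exact real_inner_self_nonpos.mp this

lemma inner_nonpos_of_sub_notMem_rootsZero {α β : V} (hα : α ∈ Φ.roots) (hβ : β ∈ Φ.roots)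
    (h : α - β ∉ rootsZero Φ) : ⟪α, β⟫ ≤ 0 :=
  not_lt.mp fun hpos ↦ h (Φ.sub_mem_rootsZero_of_inner_pos hα hβ hpos)

variable {Φ} {f : V →ₗ[ℝ] ℝ}

lemma sub_notMem_posRoots {α γ : V} (hα : α ∈ simpleRoots Φ f) (hγ : γ ∈ posRoots Φ f) :
    α - γ ∉ posRoots Φ f :=
  fun h ↦ hα.2 ⟨α - γ, h, γ, hγ, (sub_add_cancel α γ).symm⟩

lemma sub_notMem_rootsZero_of_mem_simpleRoots (hf : ∀ α ∈ Φ.roots, f α ≠ 0) {α γ : V}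
    (hα : α ∈ simpleRoots Φ f) (hγ : γ ∈ simpleRoots Φ f) (hαγ : α ≠ γ) :
    α - γ ∉ rootsZero Φ := by
  rintro (h0 | hroot)
  · exact hαγ (sub_eq_zero.mp h0)
  rcases (hf _ hroot).lt_or_gt with hneg | hpos
  · refine sub_notMem_posRoots hγ hα.1 ⟨?_, ?_⟩
    · simpa using Φ.neg_mem hroot
    · rw [← neg_sub, map_neg]
      linarith
  · exact sub_notMem_posRoots hα hγ.1 ⟨hroot, hpos⟩

end ReducedRootSystem

open ReducedRootSystem

/- If `⟪β - αi, αj⟫ > 0` or `⟪β - αj, αi⟫ > 0`, subtracting the simple root from the root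
`β - αi` resp. `β - αj` lands in `Φ₀`. Otherwise `⟪β - αi, αj⟫`, `⟪β - αj, αi⟫`,
`⟪β - αi, β - αj⟫` and `⟪αi, αj⟫` are all `≤ 0`, since none of the corresponding differences
is in `Φ₀`; but expanding `⟪(β - αi) + αi, (β - αj) + αj⟫` writes `⟪β, β⟫ > 0` as their sum. -/
theorem root_sub_two_simple_roots_general
    {V : Type} [NormedAddCommGroup V] [InnerProductSpace ℝ V]
    (Φ : ReducedRootSystem V) (f : V →ₗ[ℝ] ℝ) (hf : ∀ α ∈ Φ.roots, f α ≠ 0)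
    (αi αj : V) (hαi : αi ∈ simpleRoots Φ f) (hαj : αj ∈ simpleRoots Φ f) (hij : αi ≠ αj)
    (β : V) (hβ : β ∈ Φ.roots)
    (hβi : β - αi ∈ rootsZero Φ) (hβj : β - αj ∈ rootsZero Φ) :
    β - αi - αj ∈ rootsZero Φ := by
  have hαij := sub_notMem_rootsZero_of_mem_simpleRoots hf hαi hαj hij
  have hαji := sub_notMem_rootsZero_of_mem_simpleRoots hf hαj hαi hij.symm
  have hβi' : β - αi ∈ Φ.roots :=
    hβi.resolve_left fun h ↦ hαij (sub_eq_zero.mp h ▸ hβj)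
  have hβj' : β - αj ∈ Φ.roots :=
    hβj.resolve_left fun h ↦ hαji (sub_eq_zero.mp h ▸ hβi)
  by_contra hnot
  have h₁ : ⟪β - αi, αj⟫ ≤ 0 := Φ.inner_nonpos_of_sub_notMem_rootsZero hβi' hαj.1.1 hnot
  have h₂ : ⟪αi, β - αj⟫ ≤ 0 := real_inner_comm αi (β - αj) ▸
    Φ.inner_nonpos_of_sub_notMem_rootsZero hβj' hαi.1.1 (sub_right_comm β αi αj ▸ hnot)
  have h₃ : ⟪β - αi, β - αj⟫ ≤ 0 := Φ.inner_nonpos_of_sub_notMem_rootsZero hβi' hβj'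
    (sub_sub_sub_cancel_left αi αj β ▸ hαji)
  have h₄ : ⟪αi, αj⟫ ≤ 0 := Φ.inner_nonpos_of_sub_notMem_rootsZero hαi.1.1 hαj.1.1 hαij
  have hββ : ⟪β, β⟫ = ⟪β - αi, β - αj⟫ + ⟪β - αi, αj⟫ + ⟪αi, β - αj⟫ + ⟪αi, αj⟫ := by
    simp only [inner_sub_left, inner_sub_right]
    ring
  exact Φ.nonzero β hβ (real_inner_self_nonpos.mp (by linarith))

/-- If `αi ≠ αj` are distinct simple roots and `β` is a root such that
`β - αi` and `β - αj` are each roots or zero, then `β - αi - αj` is a root or zero. -/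
theorem root_sub_two_simple_roots
    {V : Type} [NormedAddCommGroup V] [InnerProductSpace ℝ V] [FiniteDimensional ℝ V]
    (Φ : ReducedRootSystem V) (f : V →ₗ[ℝ] ℝ) (hf : ∀ α ∈ Φ.roots, f α ≠ 0)
    (αi αj : V) (hαi : αi ∈ simpleRoots Φ f) (hαj : αj ∈ simpleRoots Φ f) (hij : αi ≠ αj)
    (β : V) (hβ : β ∈ Φ.roots)
    (hβi : β - αi ∈ rootsZero Φ) (hβj : β - αj ∈ rootsZero Φ) :
    β - αi - αj ∈ rootsZero Φ :=
  root_sub_two_simple_roots_general Φ f hf αi αj hαi hαj hij β hβ hβi hβj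
end

section
/- Let Φ = {r₀, r₁, r₂, r₃, r₄, r₅} be the root system of type A₂, realized in ℝ² with r₀ = a, r₁ = a+b, r₂ = b, r₃ = −a, r₄ = −a−b, r₅ = −b for vectors a, b ∈ ℝ² of equal length with angle 2π/3 between them (so that, with indices taken mod 6, rᵢ + r_{i+2} = r_{i+1} and rᵢ + r_{i+3} = 0). Define a ℤ-valued 2-cochain ω by ω(rᵢ|r_{i+2}) = 1, ω(rᵢ|r_{i+3}) = 0, and ω(rᵢ|r_{i+4}) = −1 for all i mod 6. Then ω is a 2-cocycle, ω is antisymmetric (ω(β|α) = −ω(α|β) for all pairs), ω ≠ 0, and there is no 1-cochain ω¹: Φ₀ → ℤ with ω(α|β) = ω¹(α) + ω¹(β) − ω¹(α+β) for all pairs. In particular the second antisymmetric cohomology group H²₋(A₂,ℤ) is nontrivial. -/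
/-!
In coordinates with respect to `a, b` the roots form the hexagon `±(1,0), ±(1,1), ±(0,1)` in
`ℤ²`; the coordinates exist because for the area form Lagrange's identity
`⟪a, b⟫² + area(a, b)² = ‖a‖²‖b‖²` gives `area(a, b)² = ¾‖a‖⁴ ≠ 0`.
The cochain `ω(v, w)` is the sign of `area(v, w)` relative to `area(a, b)`, i.e. the sign of the
lattice determinant, so the cocycle identity is a finite check on the hexagon.
If `ω = δω¹`, summing over the hexagon gives `∑ᵢ ω(rᵢ, rᵢ₊₂) = ∑ᵢ ω¹(rᵢ)` and
`∑ᵢ ω(rᵢ, rᵢ₊₃) = 2 ∑ᵢ ω¹(rᵢ)`, whereas these sums are `6` and `0`.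
-/

open scoped RealInnerProductSpace

/-- The six roots of the `A₂` root system realized in `ℝ²`, built from two vectors
`a, b`:  `r₀ = a`, `r₁ = a+b`, `r₂ = b`, `r₃ = -a`, `r₄ = -a-b`, `r₅ = -b`
(indices taken mod 6). -/
noncomputable def A2root (a b : EuclideanSpace ℝ (Fin 2)) : Fin 6 → EuclideanSpace ℝ (Fin 2) :=
  ![a, a + b, b, -a, -a - b, -b]

/-- `Φ₀ = Φ ∪ {0}` for the `A₂` root system. -/
def A2zero (a b : EuclideanSpace ℝ (Fin 2)) : Set (EuclideanSpace ℝ (Fin 2)) :=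
  insert 0 (Set.range (A2root a b))

open Module

section Cochains

variable {M G : Type*} [AddZeroClass M] [AddCommGroup G]

def IsTwoCocycleOn (S : Set M) (ω : M → M → G) : Prop :=
  ∀ α ∈ S, ∀ β ∈ S, ∀ γ ∈ S, α + β ∈ S → β + γ ∈ S → α + β + γ ∈ S →
    ω β γ - ω (α + β) γ + ω α (β + γ) - ω α β = 0

def IsTwoCoboundaryOn (S : Set M) (ω : M → M → G) : Prop :=
  ∃ ω1 : M → G, ω1 0 = 0 ∧ ∀ α ∈ S, ∀ β ∈ S, α + β ∈ S → ω α β = ω1 α + ω1 β - ω1 (α + β)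

theorem IsTwoCocycleOn.image {N : Type*} [AddZeroClass N] {φ : M →+ N}
    (hφ : Function.Injective φ) {S : Set M} {ω' : M → M → G} (h : IsTwoCocycleOn S ω')
    {ω : N → N → G} (hω : ∀ p q, ω (φ p) (φ q) = ω' p q) : IsTwoCocycleOn (φ '' S) ω := by
  rintro _ ⟨p, hp, rfl⟩ _ ⟨q, hq, rfl⟩ _ ⟨r, hr, rfl⟩ hpq hqr hpqr
  simp only [← map_add, hφ.mem_set_image] at hpq hqr hpqr ⊢
  simp only [hω]
  exact h p hp q hq r hr hpq hqr hpqr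

theorem IsTwoCoboundaryOn.two_nsmul_sum_hexagon {S : Set M} {ω : M → M → G}
    (h : IsTwoCoboundaryOn S ω) (r : Fin 6 → M) (hS : ∀ i, r i ∈ S) (h0 : (0 : M) ∈ S)
    (hr2 : ∀ i, r i + r (i + 2) = r (i + 1)) (hr3 : ∀ i, r i + r (i + 3) = 0) :
    2 • ∑ i, ω (r i) (r (i + 2)) = ∑ i, ω (r i) (r (i + 3)) := by
  obtain ⟨ω1, hω10, hω1⟩ := h
  have e2 i : ω (r i) (r (i + 2)) = ω1 (r i) + ω1 (r (i + 2)) - ω1 (r (i + 1)) := by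
    rw [hω1 _ (hS i) _ (hS _) (hr2 i ▸ hS _), hr2]
  have e3 i : ω (r i) (r (i + 3)) = ω1 (r i) + ω1 (r (i + 3)) := by
    rw [hω1 _ (hS i) _ (hS _) (hr3 i ▸ h0), hr3, hω10, sub_zero]
  have shift (k : Fin 6) : ∑ i, ω1 (r (i + k)) = ∑ i, ω1 (r i) :=
    Fintype.sum_equiv (Equiv.addRight k) _ _ fun _ => rfl
  simp only [e2, e3, Finset.sum_add_distrib, Finset.sum_sub_distrib, shift]
  abel

end Cochains

def hexRoot : Fin 6 → ℤ × ℤ := ![(1, 0), (1, 1), (0, 1), (-1, 0), (-1, -1), (0, -1)]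

def latticeCochain (p q : ℤ × ℤ) : ℤ := Int.sign (p.1 * q.2 - p.2 * q.1)

theorem isTwoCocycleOn_latticeCochain :
    IsTwoCocycleOn (insert 0 (Set.range hexRoot)) latticeCochain := by
  -- as a `Finset` the quantifiers become decidable
  rw [← Set.image_univ, ← Finset.coe_univ, ← Finset.coe_image, ← Finset.coe_insert]
  unfold IsTwoCocycleOn
  simp only [Finset.mem_coe]
  decide

theorem hexRoot_add (i : Fin 6) :
    hexRoot i + hexRoot (i + 2) = hexRoot (i + 1) ∧ hexRoot i + hexRoot (i + 3) = 0 := by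
  revert i; decide

theorem latticeCochain_hexRoot (i : Fin 6) :
    latticeCochain (hexRoot i) (hexRoot (i + 2)) = 1 ∧
      latticeCochain (hexRoot i) (hexRoot (i + 3)) = 0 ∧
      latticeCochain (hexRoot i) (hexRoot (i + 4)) = -1 := by
  revert i; decide

section Lattice

variable {E : Type*} [AddCommGroup E]

def latticeMap (a b : E) : ℤ × ℤ →+ E := (zmultiplesHom E a).coprod (zmultiplesHom E b)

theorem latticeMap_apply (a b : E) (p : ℤ × ℤ) : latticeMap a b p = p.1 • a + p.2 • b := rfl

end Lattice

section Plane

variable {E : Type*} [NormedAddCommGroup E] [InnerProductSpace ℝ E] [Fact (finrank ℝ E = 2)]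
  (o : Orientation ℝ E (Fin 2))

theorem areaForm_ne_zero_of_norm_eq_of_inner_eq {a b : E} (ha : a ≠ 0) (hnorm : ‖b‖ = ‖a‖)
    (hangle : ⟪a, b⟫ = -(‖a‖ ^ 2) / 2) : o.areaForm a b ≠ 0 := by
  intro h
  have hsq := o.inner_sq_add_areaForm_sq a b
  rw [hangle, hnorm, h] at hsq
  nlinarith [pow_pos (norm_pos_iff.mpr ha) 4]

theorem areaForm_latticeMap (a b : E) (p q : ℤ × ℤ) :
    o.areaForm (latticeMap a b p) (latticeMap a b q) =
      (p.1 * q.2 - p.2 * q.1) • o.areaForm a b := by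
  simp only [latticeMap_apply, map_add, map_zsmul, LinearMap.add_apply, LinearMap.smul_apply,
    o.areaForm_apply_self, o.areaForm_swap b a, zsmul_eq_mul, Int.cast_sub, Int.cast_mul]
  ring

theorem latticeMap_injective {a b : E} (hab : o.areaForm a b ≠ 0) :
    Function.Injective (latticeMap a b) := by
  intro p q h
  have hdet (r : ℤ × ℤ) : p.1 * r.2 - p.2 * r.1 = q.1 * r.2 - q.2 * r.1 :=
    smul_left_injective ℤ hab (by simp only [← areaForm_latticeMap, h])
  exact Prod.ext (by simpa using hdet (0, 1)) (by simpa using hdet (1, 0))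

noncomputable def areaSignCochain (a b v w : E) : ℤ :=
  SignType.sign (o.areaForm v w * o.areaForm a b)

theorem areaSignCochain_latticeMap {a b : E} (hab : o.areaForm a b ≠ 0) (p q : ℤ × ℤ) :
    areaSignCochain o a b (latticeMap a b p) (latticeMap a b q) = latticeCochain p q := by
  rw [areaSignCochain, areaForm_latticeMap, zsmul_eq_mul, mul_assoc, sign_mul,
    sign_pos (mul_self_pos.mpr hab), mul_one, sign_intCast, latticeCochain, Int.sign_eq_sign]

theorem areaSignCochain_swap (a b v w : E) :
    areaSignCochain o a b w v = -areaSignCochain o a b v w := by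
  rw [areaSignCochain, areaSignCochain, o.areaForm_swap w v, neg_mul, Left.sign_neg,
    SignType.coe_neg]

theorem areaSignCochain_zero_left (a b v : E) : areaSignCochain o a b 0 v = 0 := by
  simp [areaSignCochain]

theorem areaSignCochain_zero_right (a b v : E) : areaSignCochain o a b v 0 = 0 := by
  simp [areaSignCochain]

end Plane

theorem A2root_eq_latticeMap_comp (a b : EuclideanSpace ℝ (Fin 2)) :
    A2root a b = latticeMap a b ∘ hexRoot := by
  funext i
  fin_cases i <;> simp [A2root, hexRoot, latticeMap_apply]
  abel

theorem A2zero_eq_image (a b : EuclideanSpace ℝ (Fin 2)) :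
    A2zero a b = latticeMap a b '' insert 0 (Set.range hexRoot) := by
  rw [A2zero, Set.image_insert_eq, map_zero, ← Set.range_comp, A2root_eq_latticeMap_comp]

/-- On the root system of type `A₂` (realized in `ℝ²` by two vectors of
equal length with angle `2π/3` between them, so that `rᵢ + r_{i+2} = r_{i+1}` and
`rᵢ + r_{i+3} = 0`), the ℤ-valued 2-cochain determined by `ω(rᵢ|r_{i+2}) = 1`,
`ω(rᵢ|r_{i+3}) = 0`, `ω(rᵢ|r_{i+4}) = -1` exists, is a nonzero antisymmetric 2-cocycle,
and is not the coboundary of any 1-cochain; hence `H²₋(A₂,ℤ) ≠ 0`. -/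
theorem A2_antisymmetric_cohomology_nontrivial
    (a b : EuclideanSpace ℝ (Fin 2)) (ha : a ≠ 0) (hnorm : ‖b‖ = ‖a‖)
    (hangle : ⟪a, b⟫ = -(‖a‖ ^ 2) / 2) :
    (∀ i : Fin 6, A2root a b i + A2root a b (i + 2) = A2root a b (i + 1) ∧
        A2root a b i + A2root a b (i + 3) = 0) ∧
    ∃ ω : EuclideanSpace ℝ (Fin 2) → EuclideanSpace ℝ (Fin 2) → ℤ,
      (∀ v, ω 0 v = 0) ∧ (∀ v, ω v 0 = 0) ∧
      (∀ i : Fin 6, ω (A2root a b i) (A2root a b (i + 2)) = 1 ∧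
          ω (A2root a b i) (A2root a b (i + 3)) = 0 ∧
          ω (A2root a b i) (A2root a b (i + 4)) = -1) ∧
      (∀ α ∈ A2zero a b, ∀ β ∈ A2zero a b, ∀ γ ∈ A2zero a b,
        α + β ∈ A2zero a b → β + γ ∈ A2zero a b → α + β + γ ∈ A2zero a b →
        ω β γ - ω (α + β) γ + ω α (β + γ) - ω α β = 0) ∧
      (∀ α ∈ A2zero a b, ∀ β ∈ A2zero a b, α + β ∈ A2zero a b → ω β α = - ω α β) ∧
      (¬ ∀ α ∈ A2zero a b, ∀ β ∈ A2zero a b, α + β ∈ A2zero a b → ω α β = 0) ∧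
      (¬ ∃ ω1 : EuclideanSpace ℝ (Fin 2) → ℤ, ω1 0 = 0 ∧
        ∀ α ∈ A2zero a b, ∀ β ∈ A2zero a b, α + β ∈ A2zero a b →
          ω α β = ω1 α + ω1 β - ω1 (α + β)) := by
  have : Fact (finrank ℝ (EuclideanSpace ℝ (Fin 2)) = 2) := ⟨finrank_euclideanSpace_fin⟩
  let o : Orientation ℝ (EuclideanSpace ℝ (Fin 2)) (Fin 2) :=
    (EuclideanSpace.basisFun (Fin 2) ℝ).toBasis.orientation
  have hab := areaForm_ne_zero_of_norm_eq_of_inner_eq o ha hnorm hangle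
  have hω (p q : ℤ × ℤ) := areaSignCochain_latticeMap o hab p q
  have hmem (i : Fin 6) : A2root a b i ∈ A2zero a b := Set.mem_insert_of_mem _ ⟨i, rfl⟩
  have hrel (i : Fin 6) : A2root a b i + A2root a b (i + 2) = A2root a b (i + 1) ∧
      A2root a b i + A2root a b (i + 3) = 0 := by
    simp only [A2root_eq_latticeMap_comp, Function.comp, ← map_add, hexRoot_add, map_zero, and_self]
  have hval (i : Fin 6) : areaSignCochain o a b (A2root a b i) (A2root a b (i + 2)) = 1 ∧
      areaSignCochain o a b (A2root a b i) (A2root a b (i + 3)) = 0 ∧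
      areaSignCochain o a b (A2root a b i) (A2root a b (i + 4)) = -1 := by
    simpa only [A2root_eq_latticeMap_comp, Function.comp, hω] using latticeCochain_hexRoot i
  refine ⟨hrel, areaSignCochain o a b, areaSignCochain_zero_left o a b,
    areaSignCochain_zero_right o a b, hval, ?_,
    fun α _ β _ _ => areaSignCochain_swap o a b α β, ?_, ?_⟩
  · rw [A2zero_eq_image]
    exact isTwoCocycleOn_latticeCochain.image (latticeMap_injective o hab) hω
  · intro h
    have := h _ (hmem 0) _ (hmem 2) ((hrel 0).1 ▸ hmem 1)
    exact one_ne_zero ((hval 0).1.symm.trans this)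
  · intro hcob
    have := IsTwoCoboundaryOn.two_nsmul_sum_hexagon hcob _ hmem (Set.mem_insert _ _)
      (fun i => (hrel i).1) (fun i => (hrel i).2)
    simp [hval] at this
end

section
/- Let Φ = {±e₁, ±e₂, ±(e₁+e₂), ±(e₁−e₂)} be the root system of type B₂ in ℝ² with standard basis e₁, e₂; call ±e₁, ±e₂ the short roots and ±(e₁+e₂), ±(e₁−e₂) the long roots. Define a ℤ-valued 2-cochain ω by ω(α|β) = 1 if both α and β are short roots, and ω(α|β) = 0 otherwise (for pairs α,β ∈ Φ₀ with α+β ∈ Φ₀, with ω vanishing if an argument is 0). Then ω is a symmetric 2-cocycle taking values in the nonnegative integers, but there is no 1-cochain ω¹: Φ₀ → ℤ taking only nonnegative values with ω¹(0) = 0 such that ω(α|β) = ω¹(α) + ω¹(β) − ω¹(α+β) for all pairs; that is, ω is not exact over the nonnegative integers (even though, by the triviality of H²₊(Φ,ℤ), it is exact over ℤ). -/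
/-- The first standard basis vector `e₁` of `ℝ²`. -/
noncomputable def b2e1 : EuclideanSpace ℝ (Fin 2) := EuclideanSpace.single 0 1

/-- The second standard basis vector `e₂` of `ℝ²`. -/
noncomputable def b2e2 : EuclideanSpace ℝ (Fin 2) := EuclideanSpace.single 1 1

/-- The short roots `±e₁, ±e₂` of the `B₂` root system. -/
def B2short : Set (EuclideanSpace ℝ (Fin 2)) := {b2e1, -b2e1, b2e2, -b2e2}

/-- The long roots `±(e₁+e₂), ±(e₁-e₂)` of the `B₂` root system. -/
def B2long : Set (EuclideanSpace ℝ (Fin 2)) :=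
  {b2e1 + b2e2, -(b2e1 + b2e2), b2e1 - b2e2, -(b2e1 - b2e2)}

/-- The root system of type `B₂` in `ℝ²`. -/
def B2roots : Set (EuclideanSpace ℝ (Fin 2)) := B2short ∪ B2long

/-- `Φ₀ = Φ ∪ {0}` for the `B₂` root system. -/
def B2zero : Set (EuclideanSpace ℝ (Fin 2)) := insert 0 B2roots

open Classical in
/-- The 2-cochain on `B₂` given by `ω(α|β) = 1` if both `α` and `β` are short roots and
`ω(α|β) = 0` otherwise. -/
noncomputable def omegaB2 (α β : EuclideanSpace ℝ (Fin 2)) : ℤ :=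
  if α ∈ B2short ∧ β ∈ B2short then 1 else 0

/-!
Write `s` for the indicator of the short roots, so that `ω(α|β) = s α * s β`. On `Φ₀` we have
`s v ≡ v₁ + v₂ (mod 2)` and the coordinate sum is additive; as `s` takes values in `{0, 1}`, this
gives `s (α + β) = s α + s β - 2 s α s β`. The cocycle identity is then a ring identity, and
`(s v + v₁ + v₂) / 2` is an integral primitive of `ω`.

A nonnegative primitive `f` vanishes on every long root `γ`, since `ω(γ|-γ) = 0` forces
`f γ + f (-γ) = 0`. The relations at `(e₂, -e₂)`, `(e₁, e₂)` and `(e₁, -e₂)` then read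
`f e₂ + f (-e₂) = 1` and `f e₁ + f (±e₂) = 1`, whence `2 f e₁ = 1`.
-/

lemma mul_cocycle_of_add_eq {V R : Type*} [Add V] [CommRing R] {s : V → R} {α β γ : V}
    (hαβ : s (α + β) = s α + s β - 2 * s α * s β)
    (hβγ : s (β + γ) = s β + s γ - 2 * s β * s γ) :
    s β * s γ - s (α + β) * s γ + s α * s (β + γ) - s α * s β = 0 := by
  rw [hαβ, hβγ]; ring

lemma mul_eq_ediv_two_coboundary {V : Type*} [Add V] {s c : V → ℤ} {α β : V}
    (hα : 2 ∣ s α + c α) (hβ : 2 ∣ s β + c β)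
    (hs : s (α + β) = s α + s β - 2 * s α * s β) (hc : c (α + β) = c α + c β) :
    s α * s β = (s α + c α) / 2 + (s β + c β) / 2 - (s (α + β) + c (α + β)) / 2 := by
  obtain ⟨k, hk⟩ := hα
  obtain ⟨l, hl⟩ := hβ
  have hαβ : s (α + β) + c (α + β) = 2 * (k + l - s α * s β) := by rw [hs, hc]; linarith
  rw [hk, hl, hαβ]
  simp only [Int.mul_ediv_cancel_left _ two_ne_zero]
  ring

@[simp] lemma b2e1_apply_zero : b2e1 0 = 1 := by simp [b2e1]
@[simp] lemma b2e1_apply_one : b2e1 1 = 0 := by simp [b2e1]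
@[simp] lemma b2e2_apply_zero : b2e2 0 = 0 := by simp [b2e2]
@[simp] lemma b2e2_apply_one : b2e2 1 = 1 := by simp [b2e2]

lemma ext_fin_two_iff {v w : EuclideanSpace ℝ (Fin 2)} : v = w ↔ v 0 = w 0 ∧ v 1 = w 1 := by
  rw [PiLp.ext_iff, Fin.forall_fin_two]

lemma mem_B2short_iff {v : EuclideanSpace ℝ (Fin 2)} : v ∈ B2short ↔
    (v 0 = 1 ∧ v 1 = 0) ∨ (v 0 = -1 ∧ v 1 = 0) ∨ (v 0 = 0 ∧ v 1 = 1) ∨ (v 0 = 0 ∧ v 1 = -1) := by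
  simp [B2short, ext_fin_two_iff]

lemma mem_B2zero_iff {v : EuclideanSpace ℝ (Fin 2)} : v ∈ B2zero ↔
    (v 0 = -1 ∨ v 0 = 0 ∨ v 0 = 1) ∧ (v 1 = -1 ∨ v 1 = 0 ∨ v 1 = 1) := by
  simp only [B2zero, B2roots, B2short, B2long, Set.mem_insert_iff, Set.mem_union,
    Set.mem_singleton_iff, ext_fin_two_iff]
  constructor
  · rintro (h | ((h|h|h|h) | (h|h|h|h))) <;> simp_all
  · rintro ⟨h0 | h0 | h0, h1 | h1 | h1⟩ <;> simp_all

open Classical in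
noncomputable def shortInd (v : EuclideanSpace ℝ (Fin 2)) : ℤ := if v ∈ B2short then 1 else 0

noncomputable def coordSum (v : EuclideanSpace ℝ (Fin 2)) : ℤ := ⌊v 0 + v 1⌋

lemma omegaB2_eq_mul (α β : EuclideanSpace ℝ (Fin 2)) :
    omegaB2 α β = shortInd α * shortInd β := by
  unfold omegaB2 shortInd; split_ifs <;> simp_all

lemma shortInd_eq_zero_or_one (v : EuclideanSpace ℝ (Fin 2)) : shortInd v = 0 ∨ shortInd v = 1 := by
  unfold shortInd; split_ifs <;> simp

lemma coordSum_eq_of_mem {v : EuclideanSpace ℝ (Fin 2)} (hv : v ∈ B2zero) :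
    (coordSum v : ℝ) = v 0 + v 1 := by
  obtain ⟨h0 | h0 | h0, h1 | h1 | h1⟩ := mem_B2zero_iff.1 hv <;> norm_num [coordSum, h0, h1]

lemma coordSum_add {α β : EuclideanSpace ℝ (Fin 2)} (hα : α ∈ B2zero) (hβ : β ∈ B2zero) :
    coordSum (α + β) = coordSum α + coordSum β := by
  have : (α + β) 0 + (α + β) 1 = ((coordSum α + coordSum β : ℤ) : ℝ) := by
    push_cast [coordSum_eq_of_mem hα, coordSum_eq_of_mem hβ, PiLp.add_apply]; ring
  rw [coordSum, this, Int.floor_intCast]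

lemma two_dvd_shortInd_add_coordSum {v : EuclideanSpace ℝ (Fin 2)} (hv : v ∈ B2zero) :
    2 ∣ shortInd v + coordSum v := by
  obtain ⟨h0 | h0 | h0, h1 | h1 | h1⟩ := mem_B2zero_iff.1 hv <;>
    norm_num [shortInd, mem_B2short_iff, coordSum, h0, h1]

lemma shortInd_add {α β : EuclideanSpace ℝ (Fin 2)} (hα : α ∈ B2zero) (hβ : β ∈ B2zero)
    (hαβ : α + β ∈ B2zero) :
    shortInd (α + β) = shortInd α + shortInd β - 2 * shortInd α * shortInd β := by
  have := two_dvd_shortInd_add_coordSum hα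
  have := two_dvd_shortInd_add_coordSum hβ
  have := two_dvd_shortInd_add_coordSum hαβ
  have := coordSum_add hα hβ
  have := shortInd_eq_zero_or_one (α + β)
  rcases shortInd_eq_zero_or_one α with h | h <;> rcases shortInd_eq_zero_or_one β with h' | h' <;>
    simp only [h, h'] <;> omega

noncomputable def B2primitive (v : EuclideanSpace ℝ (Fin 2)) : ℤ := (shortInd v + coordSum v) / 2

lemma shortInd_zero : shortInd 0 = 0 := by
  simp [shortInd, mem_B2short_iff]

lemma B2primitive_zero : B2primitive 0 = 0 := by
  simp [B2primitive, shortInd_zero, coordSum]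

lemma omegaB2_eq_coboundary {α β : EuclideanSpace ℝ (Fin 2)} (hα : α ∈ B2zero) (hβ : β ∈ B2zero)
    (hαβ : α + β ∈ B2zero) :
    omegaB2 α β = B2primitive α + B2primitive β - B2primitive (α + β) := by
  rw [omegaB2_eq_mul]
  exact mul_eq_ediv_two_coboundary (two_dvd_shortInd_add_coordSum hα)
    (two_dvd_shortInd_add_coordSum hβ) (shortInd_add hα hβ hαβ) (coordSum_add hα hβ)

lemma omegaB2_cocycle {α β γ : EuclideanSpace ℝ (Fin 2)} (hα : α ∈ B2zero) (hβ : β ∈ B2zero)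
    (hγ : γ ∈ B2zero) (hαβ : α + β ∈ B2zero) (hβγ : β + γ ∈ B2zero) :
    omegaB2 β γ - omegaB2 (α + β) γ + omegaB2 α (β + γ) - omegaB2 α β = 0 := by
  simp only [omegaB2_eq_mul]
  exact mul_cocycle_of_add_eq (shortInd_add hα hβ hαβ) (shortInd_add hβ hγ hβγ)

lemma neg_mem_B2long {γ : EuclideanSpace ℝ (Fin 2)} (hγ : γ ∈ B2long) : -γ ∈ B2long := by
  simp only [B2long, Set.mem_insert_iff, Set.mem_singleton_iff] at hγ ⊢
  rcases hγ with rfl | rfl | rfl | rfl <;> simp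

lemma not_mem_B2short_of_mem_B2long {γ : EuclideanSpace ℝ (Fin 2)} (hγ : γ ∈ B2long) :
    γ ∉ B2short := by
  simp only [B2long, Set.mem_insert_iff, Set.mem_singleton_iff] at hγ
  rcases hγ with rfl | rfl | rfl | rfl <;> simp [mem_B2short_iff]

lemma not_exists_nonneg_primitive :
    ¬ ∃ f : EuclideanSpace ℝ (Fin 2) → ℤ, (∀ v ∈ B2zero, 0 ≤ f v) ∧ f 0 = 0 ∧
      ∀ α ∈ B2zero, ∀ β ∈ B2zero, α + β ∈ B2zero → omegaB2 α β = f α + f β - f (α + β) := by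
  rintro ⟨f, hnn, h0, hf⟩
  have mem {v} (hv : v ∈ B2short ∪ B2long) : v ∈ B2zero := Set.mem_insert_of_mem _ hv
  have long_eq_zero {γ} (hγ : γ ∈ B2long) : f γ = 0 := by
    have := hf γ (mem (.inr hγ)) (-γ) (mem (.inr (neg_mem_B2long hγ))) (by simp [B2zero])
    simp only [omegaB2, not_mem_B2short_of_mem_B2long hγ, false_and, if_false, add_neg_cancel,
      h0] at this
    linarith [hnn γ (mem (.inr hγ)), hnn (-γ) (mem (.inr (neg_mem_B2long hγ)))]
  have hpair {α β} (hα : α ∈ B2short) (hβ : β ∈ B2short) (hαβ : α + β ∈ B2zero) :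
      f α + f β - f (α + β) = 1 := by
    rw [← hf α (mem (.inl hα)) β (mem (.inl hβ)) hαβ, omegaB2, if_pos ⟨hα, hβ⟩]
  have he1 : b2e1 ∈ B2short := by simp [B2short]
  have he2 : b2e2 ∈ B2short := by simp [B2short]
  have he2' : -b2e2 ∈ B2short := by simp [B2short]
  have hplus : b2e1 + b2e2 ∈ B2long := by simp [B2long]
  have hminus : b2e1 + -b2e2 ∈ B2long := by simp [B2long, ← sub_eq_add_neg]
  have h₁ := hpair he2 he2' (by simp [B2zero])
  have h₂ := hpair he1 he2 (mem (.inr hplus))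
  have h₃ := hpair he1 he2' (mem (.inr hminus))
  rw [add_neg_cancel, h0] at h₁
  rw [long_eq_zero hplus] at h₂
  rw [long_eq_zero hminus] at h₃
  omega

/-- On the root system of type `B₂`, the 2-cochain `ω` equal to `1` on
pairs of short roots and `0` otherwise is a symmetric 2-cocycle with nonnegative values,
but it is not the coboundary of any 1-cochain taking only nonnegative values — even though
it is exact over `ℤ`. -/
theorem B2_cocycle_not_exact_over_nonneg :
    (∀ v, omegaB2 0 v = 0) ∧ (∀ v, omegaB2 v 0 = 0) ∧
    (∀ α ∈ B2zero, ∀ β ∈ B2zero, α + β ∈ B2zero → omegaB2 β α = omegaB2 α β) ∧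
    (∀ α ∈ B2zero, ∀ β ∈ B2zero, ∀ γ ∈ B2zero,
      α + β ∈ B2zero → β + γ ∈ B2zero → α + β + γ ∈ B2zero →
      omegaB2 β γ - omegaB2 (α + β) γ + omegaB2 α (β + γ) - omegaB2 α β = 0) ∧
    (∀ α β : EuclideanSpace ℝ (Fin 2), 0 ≤ omegaB2 α β) ∧
    (¬ ∃ ω1 : EuclideanSpace ℝ (Fin 2) → ℤ, (∀ v ∈ B2zero, 0 ≤ ω1 v) ∧ ω1 0 = 0 ∧
      ∀ α ∈ B2zero, ∀ β ∈ B2zero, α + β ∈ B2zero →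
        omegaB2 α β = ω1 α + ω1 β - ω1 (α + β)) ∧
    (∃ ω1 : EuclideanSpace ℝ (Fin 2) → ℤ, ω1 0 = 0 ∧
      ∀ α ∈ B2zero, ∀ β ∈ B2zero, α + β ∈ B2zero →
        omegaB2 α β = ω1 α + ω1 β - ω1 (α + β)) := by
  refine ⟨fun v => ?_, fun v => ?_, fun α _ β _ _ => ?_, fun α hα β hβ γ hγ hαβ hβγ _ => ?_,
    fun α β => ?_, not_exists_nonneg_primitive,
    ⟨B2primitive, B2primitive_zero, fun α hα β hβ hαβ => omegaB2_eq_coboundary hα hβ hαβ⟩⟩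
  · rw [omegaB2_eq_mul, shortInd_zero, zero_mul]
  · rw [omegaB2_eq_mul, shortInd_zero, mul_zero]
  · rw [omegaB2_eq_mul, omegaB2_eq_mul, mul_comm]
  · exact omegaB2_cocycle hα hβ hγ hαβ hβγ
  · unfold omegaB2; split_ifs <;> norm_num
end
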